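/- Define P_φ(v) := v − Σ_{1 ≤ k ≤ ℓ ≤ N} (v, φ^{kℓ})_H · ψ^{kℓ} for v ∈ Ṽ^N. Then for every v ∈ Ṽ^N: (i) P_φ(v) ∈ T_φ; (ii) a(v − P_φ(v), η) = 0 for all η ∈ T_φ; and (iii) P_φ(P_φ(v)) = P_φ(v). Hence P_φ is the a-orthogonal projection of Ṽ^N onto T_φ. -/

import Mathlib

open scoped RealInnerProductSpace

/-- Multiplication of a tuple by a matrix from the right: `(vS)_j = Σ_i S_{ij} v_i`. -/
def smulMat {N : ℕ} {V : Type*} [AddCommGroup V] [Module ℝ V]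
    (v : Fin N → V) (S : Matrix (Fin N) (Fin N) ℝ) : Fin N → V :=
  fun j => ∑ i, S i j • v i

/-- The normalized symmetric matrices `S^{ij}`: `S^{ii} = e_i e_iᵀ` and, for `i ≠ j`,
`S^{ij} = (e_i e_jᵀ + e_j e_iᵀ)/√2`. -/
noncomputable def SijMat {N : ℕ} (i j : Fin N) : Matrix (Fin N) (Fin N) ℝ :=
  if i = j then Matrix.single i i 1
  else (Real.sqrt 2)⁻¹ • (Matrix.single i j 1 + Matrix.single j i 1)

/-- The outer product of tuples in `Ṽ^N`, computed in `H₀` through the embedding `ι`. -/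
noncomputable def outerProdI {N : ℕ} {V H₀ : Type*} [NormedAddCommGroup V]
    [NormedAddCommGroup H₀] [InnerProductSpace ℝ H₀] [NormedSpace ℝ V]
    (ι : V →L[ℝ] H₀) (v w : Fin N → V) : Matrix (Fin N) (Fin N) ℝ :=
  Matrix.of fun i j => ⟪ι (v i), ι (w j)⟫

/-- The inner product `(v,w)_H = tr⟦v,w⟧`, computed in `H₀` through the embedding `ι`. -/
noncomputable def innerHI {N : ℕ} {V H₀ : Type*} [NormedAddCommGroup V]
    [NormedAddCommGroup H₀] [InnerProductSpace ℝ H₀] [NormedSpace ℝ V]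
    (ι : V →L[ℝ] H₀) (v w : Fin N → V) : ℝ :=
  ∑ j, ⟪ι (v j), ι (w j)⟫

/-- The map `P_φ(v) = v − Σ_{k ≤ ℓ} (v, φ^{kℓ})_H ψ^{kℓ}`. -/
noncomputable def Pphi {N : ℕ} {V H₀ : Type*} [NormedAddCommGroup V]
    [NormedAddCommGroup H₀] [InnerProductSpace ℝ H₀] [NormedSpace ℝ V]
    (ι : V →L[ℝ] H₀) (φ : Fin N → V) (ψ : Fin N → Fin N → Fin N → V)
    (v : Fin N → V) : Fin N → V :=
  v - ∑ k, ∑ ℓ, if k ≤ ℓ then innerHI ι v (smulMat φ (SijMat k ℓ)) • ψ k ℓ else 0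

/-! The symmetric matrices `S^{kℓ}`, `k ≤ ℓ`, form an orthonormal basis of the symmetric matrices
for the pairing `(S, M) ↦ tr (S M)`, and `2 (u, φS)_H = tr (S (⟦u,φ⟧ + ⟦φ,u⟧))` for symmetric `S`.
So the normalization of `ψ^{kℓ}` says exactly that `⟦ψ^{kℓ},φ⟧ + ⟦φ,ψ^{kℓ}⟧ = 2 S^{kℓ}`, and
subtracting `Σ (v, φ^{kℓ})_H ψ^{kℓ}` from `v` removes the whole symmetric part of `⟦v,φ⟧`:
this is (i). All coefficients of a tangent vector vanish, which gives (iii), and (ii) is the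
`a`-orthogonality of each `ψ^{kℓ}` to `T_φ`. -/

open Matrix

namespace SijMat

variable {N : ℕ}

theorem isSymm (k ℓ : Fin N) : (SijMat k ℓ).IsSymm := by
  unfold SijMat
  split_ifs
  · simp [IsSymm]
  · refine IsSymm.smul ?_ _
    simp [IsSymm, add_comm]

theorem trace_mul (k ℓ : Fin N) (M : Matrix (Fin N) (Fin N) ℝ) :
    trace (SijMat k ℓ * M) = if k = ℓ then M k k else (√2)⁻¹ * (M ℓ k + M k ℓ) := by
  unfold SijMat
  split_ifs <;> simp [Matrix.add_mul, trace_single_mul, mul_add]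

theorem apply_eq_zero {k ℓ p q : Fin N} (hkℓ : k ≤ ℓ) (hpq : p ≤ q) (h : (k, ℓ) ≠ (p, q)) :
    SijMat k ℓ p q = 0 := by
  have hswap : ¬ (ℓ = p ∧ k = q) := by
    rintro ⟨rfl, rfl⟩
    exact h (by simp [le_antisymm hkℓ hpq])
  unfold SijMat
  split_ifs with hk
  · subst hk; simp_all
  · simp_all

theorem trace_mul_mul_apply_self {M : Matrix (Fin N) (Fin N) ℝ} (hM : M.IsSymm) (k ℓ : Fin N) :
    trace (SijMat k ℓ * M) * SijMat k ℓ k ℓ = M k ℓ := by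
  have hsq : (√2)⁻¹ * (√2)⁻¹ = (2 : ℝ)⁻¹ := by
    rw [← mul_inv, Real.mul_self_sqrt zero_le_two]
  rw [trace_mul, hM.apply k ℓ]
  unfold SijMat
  split_ifs with h
  · subst h; simp
  · simp only [Matrix.smul_apply, Matrix.add_apply, single_apply_same, single_apply_of_ne, h,
      Ne.symm h, and_self, not_false_eq_true, add_zero, smul_eq_mul, mul_one]
    linear_combination M k ℓ * 2 * hsq

theorem sum_trace_mul_smul {M : Matrix (Fin N) (Fin N) ℝ} (hM : M.IsSymm) :
    ∑ k, ∑ ℓ, (if k ≤ ℓ then trace (SijMat k ℓ * M) • SijMat k ℓ else 0) = M := by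
  -- Both sides are symmetric, and an entry with `p ≤ q` only sees the summand `(k, ℓ) = (p, q)`.
  set L := ∑ k, ∑ ℓ, (if k ≤ ℓ then trace (SijMat k ℓ * M) • SijMat k ℓ else 0)
  have hL : L.IsSymm := IsSymm.ext fun p q => by
    simp only [L, Matrix.sum_apply]
    refine Finset.sum_congr rfl fun k _ => Finset.sum_congr rfl fun ℓ _ => ?_
    split_ifs <;> simp [(isSymm k ℓ).apply p q]
  have key : ∀ p q, p ≤ q → L p q = M p q := by
    intro p q hpq
    simp only [L, Matrix.sum_apply, apply_ite (fun A : Matrix _ _ ℝ => A p q),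
      Matrix.smul_apply, smul_eq_mul, Matrix.zero_apply]
    rw [Finset.sum_eq_single p, Finset.sum_eq_single q, if_pos hpq, trace_mul_mul_apply_self hM]
    · intro ℓ _ hℓ
      split_ifs with h
      · rw [apply_eq_zero h hpq (by simp [hℓ]), mul_zero]
      · rfl
    · simp
    · intro k _ hk
      refine Finset.sum_eq_zero fun ℓ _ => ?_
      split_ifs with h
      · rw [apply_eq_zero h hpq (by simp [hk]), mul_zero]
      · rfl
    · simp
  ext p q
  rcases le_total p q with hpq | hqp
  · exact key p q hpq
  · rw [← hL.apply, ← hM.apply, key q p hqp]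

end SijMat

section Projection

variable {N : ℕ} {V H₀ : Type*} [NormedAddCommGroup V] [NormedSpace ℝ V]
  [NormedAddCommGroup H₀] [InnerProductSpace ℝ H₀] (ι : V →L[ℝ] H₀) (φ : Fin N → V)

theorem outerProdI_transpose (v w : Fin N → V) : (outerProdI ι v w)ᵀ = outerProdI ι w v := by
  ext i j
  exact real_inner_comm _ _

/-- The tangent space `T_φ` is the kernel of this map. -/
noncomputable def tangentConstraint : (Fin N → V) →ₗ[ℝ] Matrix (Fin N) (Fin N) ℝ where
  toFun u := outerProdI ι u φ + outerProdI ι φ u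
  map_add' u w := by
    ext i j
    simp only [outerProdI, Pi.add_apply, map_add, inner_add_left, inner_add_right,
      Matrix.add_apply, of_apply]
    ring
  map_smul' c u := by
    ext i j
    simp only [outerProdI, Pi.smul_apply, map_smul, real_inner_smul_left, real_inner_smul_right,
      Matrix.add_apply, Matrix.smul_apply, of_apply, Real.ringHom_apply, smul_eq_mul]
    ring

theorem tangentConstraint_apply (u : Fin N → V) :
    tangentConstraint ι φ u = outerProdI ι u φ + outerProdI ι φ u := rfl

theorem tangentConstraint_isSymm (u : Fin N → V) : (tangentConstraint ι φ u).IsSymm := by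
  rw [tangentConstraint_apply, ← outerProdI_transpose ι u φ]
  exact isSymm_add_transpose_self _

theorem innerHI_smulMat (u : Fin N → V) (S : Matrix (Fin N) (Fin N) ℝ) :
    innerHI ι u (smulMat φ S) = trace (S * outerProdI ι u φ) := by
  simp only [innerHI, smulMat, trace, diag, mul_apply, outerProdI, of_apply, map_sum, map_smul,
    inner_sum, real_inner_smul_right]
  exact Finset.sum_comm

theorem trace_mul_tangentConstraint {S : Matrix (Fin N) (Fin N) ℝ} (hS : S.IsSymm)
    (u : Fin N → V) :
    trace (S * tangentConstraint ι φ u) = 2 * innerHI ι u (smulMat φ S) := by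
  have htranspose : trace (S * (outerProdI ι u φ)ᵀ) = trace (S * outerProdI ι u φ) := by
    rw [← trace_transpose, transpose_mul, transpose_transpose, hS.eq, trace_mul_comm]
  rw [tangentConstraint_apply, ← outerProdI_transpose ι u φ, Matrix.mul_add, trace_add,
    htranspose, innerHI_smulMat]
  ring

theorem tangentConstraint_eq_two_smul_SijMat {u : Fin N → V} {k ℓ : Fin N} (hkℓ : k ≤ ℓ)
    (hu : ∀ i j : Fin N, i ≤ j → innerHI ι u (smulMat φ (SijMat i j)) =
      (if i = k then (1 : ℝ) else 0) * (if j = ℓ then (1 : ℝ) else 0)) :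
    tangentConstraint ι φ u = (2 : ℝ) • SijMat k ℓ := by
  rw [← SijMat.sum_trace_mul_smul (tangentConstraint_isSymm ι φ u)]
  calc ∑ i, ∑ j, (if i ≤ j then trace (SijMat i j * tangentConstraint ι φ u) • SijMat i j else 0)
      = ∑ i, ∑ j, (if i ≤ j then
          (2 * ((if i = k then (1 : ℝ) else 0) * (if j = ℓ then (1 : ℝ) else 0))) • SijMat i j
          else 0) := by
        refine Finset.sum_congr rfl fun i _ => Finset.sum_congr rfl fun j _ => ?_
        by_cases hij : i ≤ j
        · rw [if_pos hij, if_pos hij, trace_mul_tangentConstraint ι φ (SijMat.isSymm i j),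
            hu i j hij]
        · rw [if_neg hij, if_neg hij]
    _ = (2 : ℝ) • SijMat k ℓ := by
        rw [Finset.sum_eq_single k (fun i _ hi => by simp [hi]) (by simp),
          Finset.sum_eq_single ℓ (fun j _ hj => by simp [hj]) (by simp)]
        simp [hkℓ]

variable {ψ : Fin N → Fin N → Fin N → V}

theorem tangentConstraint_Pphi
    (hψ : ∀ k ℓ, k ≤ ℓ → tangentConstraint ι φ (ψ k ℓ) = (2 : ℝ) • SijMat k ℓ)
    (v : Fin N → V) : tangentConstraint ι φ (Pphi ι φ ψ v) = 0 := by
  simp only [Pphi, map_sub, map_sum, apply_ite (tangentConstraint ι φ), map_smul, map_zero]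
  rw [sub_eq_zero]
  conv_lhs => rw [← SijMat.sum_trace_mul_smul (tangentConstraint_isSymm ι φ v)]
  refine Finset.sum_congr rfl fun k _ => Finset.sum_congr rfl fun ℓ _ => ?_
  split_ifs with hkℓ
  · rw [hψ k ℓ hkℓ, smul_smul, trace_mul_tangentConstraint ι φ (SijMat.isSymm k ℓ), mul_comm]
  · rfl

theorem Pphi_eq_self {u : Fin N → V} (hu : tangentConstraint ι φ u = 0) : Pphi ι φ ψ u = u := by
  have hcoeff (k ℓ : Fin N) : innerHI ι u (smulMat φ (SijMat k ℓ)) = 0 := by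
    have := trace_mul_tangentConstraint ι φ (SijMat.isSymm k ℓ) u
    rw [hu, Matrix.mul_zero, trace_zero] at this
    linarith
  simp [Pphi, hcoeff]

theorem sum_aForm_sub_Pphi_eq_zero (aForm : V →ₗ[ℝ] V →ₗ[ℝ] ℝ) {η : Fin N → V}
    (hψ : ∀ k ℓ, k ≤ ℓ → ∑ j, aForm (ψ k ℓ j) (η j) = 0) (v : Fin N → V) :
    ∑ j, aForm (v j - Pphi ι φ ψ v j) (η j) = 0 := by
  simp only [Pphi, Pi.sub_apply, sub_sub_cancel, Finset.sum_apply, map_sum, LinearMap.sum_apply]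
  rw [Finset.sum_comm]
  refine Finset.sum_eq_zero fun k _ => ?_
  rw [Finset.sum_comm]
  refine Finset.sum_eq_zero fun ℓ _ => ?_
  split_ifs with hkℓ
  · simp [← Finset.mul_sum, hψ k ℓ hkℓ]
  · simp

end Projection

theorem Pphi_is_a_orthogonal_projection_general {N : ℕ}
    {V H₀ : Type*}
    [NormedAddCommGroup V] [InnerProductSpace ℝ V]
    [NormedAddCommGroup H₀] [InnerProductSpace ℝ H₀]
    (ι : V →L[ℝ] H₀)
    (aForm : V →ₗ[ℝ] V →ₗ[ℝ] ℝ)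
    (φ : Fin N → V)
    (ψ : Fin N → Fin N → Fin N → V)
    (hψa : ∀ k ℓ : Fin N, k ≤ ℓ →
      ∀ η : Fin N → V, outerProdI ι η φ + outerProdI ι φ η = 0 →
        (∑ j, aForm (ψ k ℓ j) (η j)) = 0)
    (hψH : ∀ k ℓ : Fin N, k ≤ ℓ → ∀ i j : Fin N, i ≤ j →
      innerHI ι (ψ k ℓ) (smulMat φ (SijMat i j)) =
        (if i = k then (1 : ℝ) else 0) * (if j = ℓ then (1 : ℝ) else 0)) :
    ∀ v : Fin N → V,
      (outerProdI ι (Pphi ι φ ψ v) φ + outerProdI ι φ (Pphi ι φ ψ v) = 0) ∧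
      (∀ η : Fin N → V, outerProdI ι η φ + outerProdI ι φ η = 0 →
        (∑ j, aForm (v j - Pphi ι φ ψ v j) (η j)) = 0) ∧
      Pphi ι φ ψ (Pphi ι φ ψ v) = Pphi ι φ ψ v := by
  intro v
  have hψ (k ℓ : Fin N) (hkℓ : k ≤ ℓ) : tangentConstraint ι φ (ψ k ℓ) = (2 : ℝ) • SijMat k ℓ :=
    tangentConstraint_eq_two_smul_SijMat ι φ hkℓ (hψH k ℓ hkℓ)
  have hP : tangentConstraint ι φ (Pphi ι φ ψ v) = 0 := tangentConstraint_Pphi ι φ hψ v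
  exact ⟨hP, fun η hη => sum_aForm_sub_Pphi_eq_zero ι φ aForm (fun k ℓ hkℓ => hψa k ℓ hkℓ η hη) v,
    Pphi_eq_self ι φ hP⟩

/-- `P_φ` maps into the tangent space, `v − P_φ(v)` is `a`-orthogonal to the
tangent space, and `P_φ` is idempotent; hence `P_φ` is the `a`-orthogonal projection onto
the tangent space `T_φ`. -/
theorem Pphi_is_a_orthogonal_projection {N : ℕ} (hN : 1 ≤ N)
    {V H₀ : Type*}
    [NormedAddCommGroup V] [InnerProductSpace ℝ V] [CompleteSpace V]
    [NormedAddCommGroup H₀] [InnerProductSpace ℝ H₀] [CompleteSpace H₀]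
    (ι : V →L[ℝ] H₀) (hι : Function.Injective ι)
    (aForm : V →ₗ[ℝ] V →ₗ[ℝ] ℝ)
    (hsymm : ∀ u w : V, aForm u w = aForm w u)
    (hcoer : ∃ α > 0, ∀ u : V, α * ‖u‖ ^ 2 ≤ aForm u u)
    (hbdd : ∃ β > 0, ∀ u w : V, |aForm u w| ≤ β * ‖u‖ * ‖w‖)
    (φ : Fin N → V) (hφ : outerProdI ι φ φ = 1)
    (ψ : Fin N → Fin N → Fin N → V)
    (hψa : ∀ k ℓ : Fin N, k ≤ ℓ →
      ∀ η : Fin N → V, outerProdI ι η φ + outerProdI ι φ η = 0 →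
        (∑ j, aForm (ψ k ℓ j) (η j)) = 0)
    (hψH : ∀ k ℓ : Fin N, k ≤ ℓ → ∀ i j : Fin N, i ≤ j →
      innerHI ι (ψ k ℓ) (smulMat φ (SijMat i j)) =
        (if i = k then (1 : ℝ) else 0) * (if j = ℓ then (1 : ℝ) else 0)) :
    ∀ v : Fin N → V,
      (outerProdI ι (Pphi ι φ ψ v) φ + outerProdI ι φ (Pphi ι φ ψ v) = 0) ∧
      (∀ η : Fin N → V, outerProdI ι η φ + outerProdI ι φ η = 0 →
        (∑ j, aForm (v j - Pphi ι φ ψ v j) (η j)) = 0) ∧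
      Pphi ι φ ψ (Pphi ι φ ψ v) = Pphi ι φ ψ v :=
  Pphi_is_a_orthogonal_projection_general ι aForm φ ψ hψa hψH
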